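/- Let n ≥ 1 and let G be the complete graph on Fin n. Then the real vector space 𝓜(G) of additive no-arbitrage matrices over G has dimension n - 1. -/
import Mathlib


/-- The sum of `E` over the consecutive edge steps of a walk `w` in `G`:
`∑_{i < length w} E v_i v_{i+1}`. -/
def walkSum {V : Type*} {G : SimpleGraph V} (E : V → V → ℝ) {u v : V} (w : G.Walk u v) : ℝ :=
  ∑ i ∈ Finset.range w.length, E (w.getVert i) (w.getVert (i + 1))

/-- `E` is an additive no-arbitrage matrix over `G`: it vanishes on non-adjacent pairs and
its sum over the steps of every closed walk is zero. -/
def IsNoArbitrage {V : Type*} (G : SimpleGraph V) (E : V → V → ℝ) : Prop :=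
  (∀ i j, ¬ G.Adj i j → E i j = 0) ∧ ∀ (v : V) (w : G.Walk v v), walkSum E w = 0


/-- `𝓜(G)`: the subspace of additive no-arbitrage matrices over `G`. -/
def noArbSubmodule {V : Type*} (G : SimpleGraph V) : Submodule ℝ (V → V → ℝ) where
  carrier := {E | IsNoArbitrage G E}
  zero_mem' := ⟨fun _ _ _ => rfl, fun v w => by simp [walkSum]⟩
  add_mem' := by
    rintro E E' ⟨hE0, hEw⟩ ⟨hE'0, hE'w⟩
    refine ⟨fun i j h => by simp [Pi.add_apply, hE0 i j h, hE'0 i j h], fun v w => ?_⟩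
    have : walkSum (E + E') w = walkSum E w + walkSum E' w := by
      simp [walkSum, Finset.sum_add_distrib]
    rw [this, hEw v w, hE'w v w, add_zero]
  smul_mem' := by
    rintro c E ⟨hE0, hEw⟩
    refine ⟨fun i j h => by simp [Pi.smul_apply, hE0 i j h], fun v w => ?_⟩
    have : walkSum (c • E) w = c * walkSum E w := by
      simp [walkSum, Finset.mul_sum]
    rw [this, hEw v w, mul_zero]

lemma walkSum_nil {V : Type*} {G : SimpleGraph V} (E : V → V → ℝ) (u : V) :
    walkSum E (SimpleGraph.Walk.nil : G.Walk u u) = 0 := by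
  simp [walkSum]

lemma walkSum_cons {V : Type*} {G : SimpleGraph V} (E : V → V → ℝ) {u v x : V}
    (h : G.Adj u v) (w : G.Walk v x) :
    walkSum E (SimpleGraph.Walk.cons h w) = E u v + walkSum E w := by
  unfold walkSum
  rw [SimpleGraph.Walk.length_cons, Finset.sum_range_succ']
  simp only [SimpleGraph.Walk.getVert_cons_succ, SimpleGraph.Walk.getVert_zero]
  ring

/-- The potential map: `f ↦ (i j ↦ f j - f i)`. -/
def potMap (n : ℕ) : (Fin n → ℝ) →ₗ[ℝ] (Fin n → Fin n → ℝ) where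
  toFun f := fun i j => f j - f i
  map_add' f g := by funext i j; simp; ring
  map_smul' c f := by funext i j; simp [smul_eq_mul]; ring

lemma walkSum_potMap {n : ℕ} (f : Fin n → ℝ) {u v : Fin n}
    (w : (⊤ : SimpleGraph (Fin n)).Walk u v) : walkSum (potMap n f) w = f v - f u := by
  induction w with
  | nil => simp [walkSum_nil]
  | cons h w ih =>
    rw [walkSum_cons, ih]
    show (f _ - f _) + _ = _
    ring

lemma range_potMap (n : ℕ) (hn : 1 ≤ n) :
    LinearMap.range (potMap n) = noArbSubmodule (⊤ : SimpleGraph (Fin n)) := by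
  ext E
  constructor
  · rintro ⟨f, rfl⟩
    refine ⟨fun i j h => ?_, fun v w => by rw [walkSum_potMap]; ring⟩
    have : i = j := by simpa using h
    subst this
    show f i - f i = 0
    ring
  · rintro ⟨h0, hw⟩
    set z : Fin n := ⟨0, hn⟩
    have hEdiag : ∀ i, E i i = 0 := fun i => h0 i i (by simp)
    have hneg : ∀ i, E i z = - E z i := by
      intro i
      by_cases hiz : i = z
      · subst hiz; simp [hEdiag]
      · have h1 : (⊤ : SimpleGraph (Fin n)).Adj z i := by simpa using (Ne.symm hiz)
        have h2 : (⊤ : SimpleGraph (Fin n)).Adj i z := by simpa using hiz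
        have := hw z (SimpleGraph.Walk.cons h1 (SimpleGraph.Walk.cons h2 SimpleGraph.Walk.nil))
        rw [walkSum_cons, walkSum_cons, walkSum_nil] at this
        linarith
    refine ⟨fun i => E z i, ?_⟩
    funext i j
    show E z j - E z i = E i j
    by_cases hij : i = j
    · subst hij; simp [hEdiag i]
    by_cases hiz : i = z
    · subst hiz; simp [hEdiag]
    by_cases hjz : j = z
    · subst hjz; rw [hEdiag]; rw [hneg i]; ring
    · have h1 : (⊤ : SimpleGraph (Fin n)).Adj z i := by simpa using (Ne.symm hiz)
      have h2 : (⊤ : SimpleGraph (Fin n)).Adj i j := by simpa using hij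
      have h3 : (⊤ : SimpleGraph (Fin n)).Adj j z := by simpa using hjz
      have := hw z (SimpleGraph.Walk.cons h1 (SimpleGraph.Walk.cons h2
        (SimpleGraph.Walk.cons h3 SimpleGraph.Walk.nil)))
      rw [walkSum_cons, walkSum_cons, walkSum_cons, walkSum_nil] at this
      have hj := hneg j
      linarith

lemma ker_potMap (n : ℕ) (hn : 1 ≤ n) :
    LinearMap.ker (potMap n) = Submodule.span ℝ {(fun _ => 1 : Fin n → ℝ)} := by
  ext f
  rw [Submodule.mem_span_singleton, LinearMap.mem_ker]
  constructor
  · intro h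
    refine ⟨f ⟨0, hn⟩, ?_⟩
    funext i
    have := congrFun (congrFun h i) ⟨0, hn⟩
    simp only [potMap, LinearMap.coe_mk, AddHom.coe_mk, Pi.zero_apply] at this
    simp [smul_eq_mul]
    linarith
  · rintro ⟨c, rfl⟩
    funext i j
    show (c • (fun _ => (1:ℝ))) j - (c • (fun _ => (1:ℝ))) i = 0
    simp

/-- The space of additive no-arbitrage matrices over the complete graph on `Fin n`
(`n ≥ 1`) has dimension `n - 1`. -/
theorem finrank_no_arbitrage_complete (n : ℕ) (hn : 1 ≤ n) :
    Module.finrank ℝ (noArbSubmodule (⊤ : SimpleGraph (Fin n))) = n - 1 := by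
  rw [← range_potMap n hn]
  have h := LinearMap.finrank_range_add_finrank_ker (potMap n)
  rw [ker_potMap n hn] at h
  have hone : (fun _ => 1 : Fin n → ℝ) ≠ 0 := by
    intro h0
    have := congrFun h0 ⟨0, hn⟩
    simp at this
  rw [finrank_span_singleton hone, Module.finrank_fin_fun] at h
  omega
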